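/- Let Z = L + S with Z, L, S ∈ ℝ^{N×T} and rank(L) = K, let Ω ∈ {0,1}^{N×T} be an arbitrary binary mask, let L_max ≥ ‖L‖_∞, let λ > 0 satisfy λ ≥ (2/(1−c))‖Ω ∘ S‖ for some constant c ∈ (0,1), and let L̂ be any minimizer of ‖Ω ∘ (Z − A)‖_F² + λ‖A‖_* over the set {A ∈ ℝ^{N×T} : ‖A‖_∞ ≤ L_max}. Then Δ = L̂ − L satisfies ‖Ω ∘ Δ‖_F² + cλ‖Δ‖_* ≤ 2λ‖L‖_*; in particular ‖L̂ − L‖_F ≤ ‖L̂ − L‖_* ≤ (2/c)‖L‖_* ≤ (2/c)√K·‖L‖_F. -/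

import Mathlib

open Matrix MeasureTheory ProbabilityTheory

noncomputable def frob {m n : Type*} [Fintype m] [Fintype n] (A : Matrix m n ℝ) : ℝ :=
  Real.sqrt (∑ i, ∑ j, (A i j) ^ 2)

noncomputable def opNorm {m n : Type*} [Fintype m] [Fintype n] [DecidableEq n]
    (A : Matrix m n ℝ) : ℝ :=
  ‖LinearMap.toContinuousLinearMap (Matrix.toEuclideanLin A)‖

noncomputable def nucNorm {m n : Type*} [Fintype m] [Fintype n] [DecidableEq n]
    (A : Matrix m n ℝ) : ℝ :=
  ∑ j, Real.sqrt ((show (Aᵀ * A).IsHermitian by simpa [Matrix.conjTranspose_eq_transpose_of_trivial] using Matrix.isHermitian_conjTranspose_mul_self A).eigenvalues j)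

lemma Matrix.isHermitian_transpose_mul_self {m n : Type*} [Fintype m] (A : Matrix m n ℝ) :
    (Aᵀ * A).IsHermitian := by
  simpa [Matrix.conjTranspose_eq_transpose_of_trivial] using Matrix.isHermitian_conjTranspose_mul_self A


lemma opNorm_nonneg' {m n : Type*} [Fintype m] [Fintype n] [DecidableEq n]
    (A : Matrix m n ℝ) : 0 ≤ opNorm A := norm_nonneg _

lemma mulVec_sq_le {m n : Type*} [Fintype m] [Fintype n] [DecidableEq n]
    (A : Matrix m n ℝ) (v : n → ℝ) :
    ∑ i, (A.mulVec v i) ^ 2 ≤ opNorm A ^ 2 * ∑ j, (v j) ^ 2 := by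
  have h := (LinearMap.toContinuousLinearMap (Matrix.toEuclideanLin A)).le_opNorm
    ((WithLp.equiv 2 (n → ℝ)).symm v)
  have hx : ‖(WithLp.equiv 2 (n → ℝ)).symm v‖ = Real.sqrt (∑ j, (v j) ^ 2) := by
    rw [EuclideanSpace.norm_eq]
    congr 1; refine Finset.sum_congr rfl fun j _ => ?_
    rw [Real.norm_eq_abs, sq_abs]; rfl
  have hy : ‖LinearMap.toContinuousLinearMap (Matrix.toEuclideanLin A)
      ((WithLp.equiv 2 (n → ℝ)).symm v)‖ = Real.sqrt (∑ i, (A.mulVec v i) ^ 2) := by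
    rw [show (LinearMap.toContinuousLinearMap (Matrix.toEuclideanLin A))
        ((WithLp.equiv 2 (n → ℝ)).symm v) = (WithLp.equiv 2 (m → ℝ)).symm (A.mulVec v) from rfl]
    rw [EuclideanSpace.norm_eq]
    congr 1; refine Finset.sum_congr rfl fun i _ => ?_
    rw [Real.norm_eq_abs, sq_abs]; rfl
  rw [hx, hy] at h
  have h2 := mul_self_le_mul_self (Real.sqrt_nonneg _) h
  rw [Real.mul_self_sqrt (Finset.sum_nonneg fun i _ => sq_nonneg _)] at h2
  calc ∑ i, (A.mulVec v i) ^ 2 ≤ (opNorm A * Real.sqrt (∑ j, (v j) ^ 2)) *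
      (opNorm A * Real.sqrt (∑ j, (v j) ^ 2)) := h2
    _ = opNorm A ^ 2 * ∑ j, (v j) ^ 2 := by
        rw [mul_mul_mul_comm, Real.mul_self_sqrt (Finset.sum_nonneg fun j _ => sq_nonneg _)]
        ring

lemma opNorm_le_of {m n : Type*} [Fintype m] [Fintype n] [DecidableEq n]
    (A : Matrix m n ℝ) (C : ℝ) (hC : 0 ≤ C)
    (h : ∀ v : n → ℝ, ∑ i, (A.mulVec v i) ^ 2 ≤ C ^ 2 * ∑ j, (v j) ^ 2) :
    opNorm A ≤ C := by
  apply ContinuousLinearMap.opNorm_le_bound _ hC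
  intro x
  set v : n → ℝ := (WithLp.equiv 2 (n → ℝ)) x with hv
  have hx : ‖x‖ = Real.sqrt (∑ j, (v j) ^ 2) := by
    rw [EuclideanSpace.norm_eq]
    congr 1; refine Finset.sum_congr rfl fun j _ => ?_
    rw [Real.norm_eq_abs, sq_abs]; rfl
  have hy : ‖LinearMap.toContinuousLinearMap (Matrix.toEuclideanLin A) x‖
      = Real.sqrt (∑ i, (A.mulVec v i) ^ 2) := by
    rw [show (LinearMap.toContinuousLinearMap (Matrix.toEuclideanLin A)) x
        = (WithLp.equiv 2 (m → ℝ)).symm (A.mulVec v) from rfl]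
    rw [EuclideanSpace.norm_eq]
    congr 1; refine Finset.sum_congr rfl fun i _ => ?_
    rw [Real.norm_eq_abs, sq_abs]; rfl
  rw [hx, hy]
  calc Real.sqrt (∑ i, (A.mulVec v i) ^ 2) ≤ Real.sqrt (C ^ 2 * ∑ j, (v j) ^ 2) :=
        Real.sqrt_le_sqrt (h v)
    _ = C * Real.sqrt (∑ j, (v j) ^ 2) := by
        rw [Real.sqrt_mul (sq_nonneg C), Real.sqrt_sq hC]


lemma tr_form {m n : Type*} [Fintype m] [Fintype n] (B C : Matrix m n ℝ) :
    Matrix.trace (Bᵀ * C) = ∑ j, ∑ i, B i j * C i j := by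
  simp [Matrix.trace, Matrix.diag, Matrix.mul_apply]

lemma key {m n : Type*} [Fintype m] [Fintype n] [DecidableEq n] (A : Matrix m n ℝ) :
    ∃ U : Matrix n n ℝ, Uᵀ * U = 1 ∧ U * Uᵀ = 1 ∧
      Uᵀ * (Aᵀ * A) * U =
        Matrix.diagonal ((Matrix.isHermitian_transpose_mul_self A).eigenvalues) := by
  have hH := Matrix.isHermitian_transpose_mul_self A
  refine ⟨(hH.eigenvectorUnitary : Matrix n n ℝ), ?_, ?_, ?_⟩
  · have := Matrix.mem_unitaryGroup_iff'.mp (hH.eigenvectorUnitary).2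
    simpa [Matrix.star_eq_conjTranspose,
      Matrix.conjTranspose_eq_transpose_of_trivial] using this
  · have := Matrix.mem_unitaryGroup_iff.mp (hH.eigenvectorUnitary).2
    simpa [Matrix.star_eq_conjTranspose,
      Matrix.conjTranspose_eq_transpose_of_trivial] using this
  · have := hH.conjStarAlgAut_star_eigenvectorUnitary
    simpa [Unitary.conjStarAlgAut_star_apply, Matrix.star_eq_conjTranspose,
      Matrix.conjTranspose_eq_transpose_of_trivial, Function.comp] using this

lemma eig_nonneg {m n : Type*} [Fintype m] [Fintype n] [DecidableEq n]
    (A : Matrix m n ℝ) (j : n) :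
    0 ≤ (Matrix.isHermitian_transpose_mul_self A).eigenvalues j :=
  (Matrix.posSemidef_conjTranspose_mul_self A).eigenvalues_nonneg j

lemma nucNorm_nonneg {m n : Type*} [Fintype m] [Fintype n] [DecidableEq n]
    (A : Matrix m n ℝ) : 0 ≤ nucNorm A :=
  Finset.sum_nonneg fun j _ => Real.sqrt_nonneg _

lemma trace_le_nuc_mul_op {m n : Type*} [Fintype m] [Fintype n] [DecidableEq n]
    (A M : Matrix m n ℝ) :
    Matrix.trace (Aᵀ * M) ≤ nucNorm A * opNorm M := by
  obtain ⟨U, hU1, hU2, hdiag⟩ := key A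
  set μ := (Matrix.isHermitian_transpose_mul_self A).eigenvalues with hμ
  have step1 : Matrix.trace (Aᵀ * M) = Matrix.trace ((A * U)ᵀ * (M * U)) := by
    have e : (A * U)ᵀ * (M * U) = Uᵀ * ((Aᵀ * M) * U) := by
      simp [Matrix.transpose_mul, Matrix.mul_assoc]
    rw [e, Matrix.trace_mul_comm Uᵀ ((Aᵀ * M) * U), Matrix.mul_assoc, hU2, Matrix.mul_one]
  have hBcol : ∀ j, ∑ i, (A * U) i j ^ 2 = μ j := by
    intro j
    have h1 : ((A * U)ᵀ * (A * U)) j j = Matrix.diagonal μ j j := by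
      rw [Matrix.transpose_mul, Matrix.mul_assoc, ← Matrix.mul_assoc Aᵀ, ← Matrix.mul_assoc,
        hdiag]
    simpa [Matrix.mul_apply, Matrix.diagonal_apply_eq, sq, mul_comm] using h1
  have hUcol : ∀ j, ∑ k, U k j ^ 2 = 1 := by
    intro j
    have h1 : (Uᵀ * U) j j = (1 : Matrix n n ℝ) j j := by rw [hU1]
    simpa [Matrix.mul_apply, Matrix.one_apply, sq] using h1
  have hCcol : ∀ j, ∑ i, (M * U) i j ^ 2 ≤ opNorm M ^ 2 := by
    intro j
    have h1 : ∀ i, (M * U) i j = M.mulVec (fun k => U k j) i := by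
      intro i; simp [Matrix.mul_apply, Matrix.mulVec, dotProduct]
    calc ∑ i, (M * U) i j ^ 2 = ∑ i, (M.mulVec (fun k => U k j) i) ^ 2 := by
          simp_rw [h1]
      _ ≤ opNorm M ^ 2 * ∑ k, U k j ^ 2 := mulVec_sq_le M _
      _ = opNorm M ^ 2 := by rw [hUcol j, mul_one]
  rw [step1, tr_form]
  have hcol : ∀ j, ∑ i, (A * U) i j * (M * U) i j ≤ Real.sqrt (μ j) * opNorm M := by
    intro j
    by_cases hneg : ∑ i, (A * U) i j * (M * U) i j ≤ 0
    · exact hneg.trans (mul_nonneg (Real.sqrt_nonneg _) (opNorm_nonneg' M))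
    · push_neg at hneg
      have cs := Finset.sum_mul_sq_le_sq_mul_sq Finset.univ
        (fun i => (A * U) i j) (fun i => (M * U) i j)
      have h2 : (∑ i, (A * U) i j * (M * U) i j) ^ 2 ≤ μ j * opNorm M ^ 2 := by
        rw [hBcol j] at cs
        exact cs.trans (mul_le_mul_of_nonneg_left (hCcol j) (eig_nonneg A j))
      calc ∑ i, (A * U) i j * (M * U) i j
          = Real.sqrt ((∑ i, (A * U) i j * (M * U) i j) ^ 2) := by
            rw [Real.sqrt_sq hneg.le]
        _ ≤ Real.sqrt (μ j * opNorm M ^ 2) := Real.sqrt_le_sqrt h2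
        _ = Real.sqrt (μ j) * opNorm M := by
            rw [Real.sqrt_mul (eig_nonneg A j), Real.sqrt_sq (opNorm_nonneg' M)]
  calc ∑ j, ∑ i, (A * U) i j * (M * U) i j ≤ ∑ j, Real.sqrt (μ j) * opNorm M :=
        Finset.sum_le_sum fun j _ => hcol j
    _ = nucNorm A * opNorm M := by rw [← Finset.sum_mul]; rfl

lemma sq_mulVec {m n : Type*} [Fintype m] [Fintype n] (B : Matrix m n ℝ) (z : n → ℝ) :
    ∑ i, (B.mulVec z i) ^ 2 = z ⬝ᵥ ((Bᵀ * B).mulVec z) := by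
  rw [← Matrix.mulVec_mulVec, Matrix.dotProduct_mulVec, Matrix.vecMul_transpose]
  simp [dotProduct, sq]

lemma exists_dual {m n : Type*} [Fintype m] [Fintype n] [DecidableEq n]
    (A : Matrix m n ℝ) :
    ∃ M : Matrix m n ℝ, opNorm M ≤ 1 ∧ Matrix.trace (Aᵀ * M) = nucNorm A := by
  obtain ⟨U, hU1, hU2, hdiag⟩ := key A
  set μ := (Matrix.isHermitian_transpose_mul_self A).eigenvalues with hμ
  set g : n → ℝ := fun j => if μ j = 0 then 0 else (Real.sqrt (μ j))⁻¹ with hg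
  refine ⟨A * U * Matrix.diagonal g * Uᵀ, ?_, ?_⟩
  · apply opNorm_le_of _ _ (by norm_num)
    intro v
    set w : n → ℝ := Uᵀ.mulVec v with hw
    have hMv : (A * U * Matrix.diagonal g * Uᵀ).mulVec v
        = (A * U).mulVec ((Matrix.diagonal g).mulVec w) := by
      rw [Matrix.mulVec_mulVec, Matrix.mulVec_mulVec]
    have hAtA : (A * U)ᵀ * (A * U) = Matrix.diagonal μ := by
      rw [Matrix.transpose_mul, Matrix.mul_assoc, ← Matrix.mul_assoc Aᵀ, ← Matrix.mul_assoc,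
        hdiag]
    have hsum : ∑ i, ((A * U * Matrix.diagonal g * Uᵀ).mulVec v i) ^ 2
        = ∑ j, μ j * (g j * w j) ^ 2 := by
      rw [hMv, sq_mulVec, hAtA]
      simp [dotProduct, Matrix.mulVec_diagonal, sq]
      exact Finset.sum_congr rfl fun x _ => by ring
    rw [hsum]
    have hle : ∀ j, μ j * (g j * w j) ^ 2 ≤ w j ^ 2 := by
      intro j
      by_cases h0 : μ j = 0
      · simp [hg, h0, sq_nonneg]
      · have hs : Real.sqrt (μ j) ^ 2 = μ j := Real.sq_sqrt (eig_nonneg A j)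
        simp only [hg, if_neg h0]
        have hkey : μ j * ((Real.sqrt (μ j))⁻¹ * w j) ^ 2 = w j ^ 2 := by
          rw [mul_pow, ← mul_assoc, inv_pow, hs, mul_inv_cancel₀ h0, one_mul]
        exact hkey.le
    calc ∑ j, μ j * (g j * w j) ^ 2 ≤ ∑ j, w j ^ 2 := Finset.sum_le_sum fun j _ => hle j
      _ = ∑ j, v j ^ 2 := by
          have := sq_mulVec Uᵀ v
          rw [Matrix.transpose_transpose, hU2] at this
          rw [this]
          simp [dotProduct, Matrix.one_mulVec, sq]
      _ = 1 ^ 2 * ∑ j, v j ^ 2 := by ring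
  · have e1 : Aᵀ * (A * U * Matrix.diagonal g * Uᵀ)
        = (Aᵀ * A * U * Matrix.diagonal g) * Uᵀ := by simp [Matrix.mul_assoc]
    rw [e1, Matrix.trace_mul_comm]
    have e2 : Uᵀ * (Aᵀ * A * U * Matrix.diagonal g)
        = Matrix.diagonal μ * Matrix.diagonal g := by
      rw [← hdiag]; simp [Matrix.mul_assoc]
    rw [e2, Matrix.diagonal_mul_diagonal, Matrix.trace_diagonal]
    show ∑ j, μ j * g j = ∑ j, Real.sqrt (μ j)
    refine Finset.sum_congr rfl fun j _ => ?_
    by_cases h0 : μ j = 0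
    · simp [hg, h0]
    · have hs : Real.sqrt (μ j) * Real.sqrt (μ j) = μ j := Real.mul_self_sqrt (eig_nonneg A j)
      have hsne : Real.sqrt (μ j) ≠ 0 := fun hh => h0 (by rw [← hs, hh, mul_zero])
      simp only [hg, if_neg h0]
      field_simp
      rw [sq, hs]


lemma frob_nonneg {m n : Type*} [Fintype m] [Fintype n] (A : Matrix m n ℝ) :
    0 ≤ frob A := Real.sqrt_nonneg _

lemma frob_sq {m n : Type*} [Fintype m] [Fintype n] (A : Matrix m n ℝ) :
    frob A ^ 2 = ∑ i, ∑ j, (A i j) ^ 2 :=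
  Real.sq_sqrt (Finset.sum_nonneg fun i _ => Finset.sum_nonneg fun j _ => sq_nonneg _)

lemma eigs_congr {n : Type*} [Fintype n] [DecidableEq n] {A B : Matrix n n ℝ}
    (hA : A.IsHermitian) (hB : B.IsHermitian) (h : A = B) :
    hA.eigenvalues = hB.eigenvalues := by subst h; rfl

lemma nucNorm_neg {m n : Type*} [Fintype m] [Fintype n] [DecidableEq n]
    (A : Matrix m n ℝ) : nucNorm (-A) = nucNorm A := by
  unfold nucNorm
  refine Finset.sum_congr rfl fun j _ => ?_
  rw [eigs_congr (Matrix.isHermitian_transpose_mul_self (-A))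
    (Matrix.isHermitian_transpose_mul_self A) (by simp)]

lemma sum_eig_eq_frob_sq {m n : Type*} [Fintype m] [Fintype n] [DecidableEq n]
    (A : Matrix m n ℝ) :
    ∑ j, (Matrix.isHermitian_transpose_mul_self A).eigenvalues j
      = ∑ i, ∑ j, (A i j) ^ 2 := by
  obtain ⟨U, hU1, hU2, hdiag⟩ := key A
  have h1 : Matrix.trace (Aᵀ * A)
      = ∑ j, (Matrix.isHermitian_transpose_mul_self A).eigenvalues j := by
    calc Matrix.trace (Aᵀ * A) = Matrix.trace ((Aᵀ * A) * (U * Uᵀ)) := by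
          rw [hU2, Matrix.mul_one]
      _ = Matrix.trace (Uᵀ * ((Aᵀ * A) * U)) := by
          rw [← Matrix.mul_assoc, Matrix.trace_mul_comm ((Aᵀ * A) * U) Uᵀ]
      _ = ∑ j, (Matrix.isHermitian_transpose_mul_self A).eigenvalues j := by
          rw [← Matrix.mul_assoc, hdiag, Matrix.trace_diagonal]
  rw [← h1, tr_form, Finset.sum_comm]
  simp [sq]

lemma frob_le_nuc {m n : Type*} [Fintype m] [Fintype n] [DecidableEq n]
    (A : Matrix m n ℝ) : frob A ≤ nucNorm A := by
  have h1 : frob A ^ 2 ≤ nucNorm A ^ 2 := by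
    rw [frob_sq, ← sum_eig_eq_frob_sq]
    unfold nucNorm
    calc ∑ j, (Matrix.isHermitian_transpose_mul_self A).eigenvalues j
        = ∑ j, Real.sqrt ((Matrix.isHermitian_transpose_mul_self A).eigenvalues j) ^ 2 := by
          refine Finset.sum_congr rfl fun j _ => (Real.sq_sqrt (eig_nonneg A j)).symm
      _ ≤ (∑ j, Real.sqrt ((Matrix.isHermitian_transpose_mul_self A).eigenvalues j)) ^ 2 :=
          Finset.sum_sq_le_sq_sum_of_nonneg fun j _ => Real.sqrt_nonneg _
  calc frob A = Real.sqrt (frob A ^ 2) := (Real.sqrt_sq (frob_nonneg A)).symm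
    _ ≤ Real.sqrt (nucNorm A ^ 2) := Real.sqrt_le_sqrt h1
    _ = nucNorm A := Real.sqrt_sq (nucNorm_nonneg A)

lemma nuc_triangle_sub {m n : Type*} [Fintype m] [Fintype n] [DecidableEq n]
    (X Y : Matrix m n ℝ) : nucNorm (X - Y) ≤ nucNorm X + nucNorm Y := by
  obtain ⟨M, hM1, hM2⟩ := exists_dual (X - Y)
  have h1 : Matrix.trace ((X - Y)ᵀ * M)
      = Matrix.trace (Xᵀ * M) + Matrix.trace ((-Y)ᵀ * M) := by
    rw [← Matrix.trace_add, ← Matrix.add_mul, ← Matrix.transpose_add, sub_eq_add_neg]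
  have h2 : Matrix.trace (Xᵀ * M) ≤ nucNorm X :=
    (trace_le_nuc_mul_op X M).trans
      (by nlinarith [nucNorm_nonneg X, opNorm_nonneg' M, hM1])
  have h3 : Matrix.trace ((-Y)ᵀ * M) ≤ nucNorm Y := by
    refine (trace_le_nuc_mul_op (-Y) M).trans ?_
    rw [nucNorm_neg]
    nlinarith [nucNorm_nonneg Y, opNorm_nonneg' M, hM1]
  linarith [hM2, h1]

lemma nuc_le_sqrt_rank_mul_frob {m n : Type*} [Fintype m] [Fintype n] [DecidableEq n]
    (A : Matrix m n ℝ) :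
    nucNorm A ≤ Real.sqrt (A.rank : ℝ) * frob A := by
  classical
  set μ := (Matrix.isHermitian_transpose_mul_self A).eigenvalues with hμ
  set s := Finset.univ.filter (fun j => μ j ≠ 0) with hs
  have h1 : nucNorm A = ∑ j ∈ s, Real.sqrt (μ j) := by
    refine (Finset.sum_subset (Finset.subset_univ s) fun x _ hx => ?_).symm
    rw [hs] at hx
    simp only [Finset.mem_filter, Finset.mem_univ, true_and, not_not] at hx
    rw [hμ] at hx
    rw [hx, Real.sqrt_zero]
  have hcs := Finset.sum_mul_sq_le_sq_mul_sq s (fun _ => (1 : ℝ)) (fun j => Real.sqrt (μ j))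
  simp only [one_mul, one_pow] at hcs
  have h2 : (∑ j ∈ s, Real.sqrt (μ j)) ^ 2 ≤ (s.card : ℝ) * ∑ j ∈ s, μ j := by
    refine hcs.trans_eq ?_
    rw [Finset.sum_const, nsmul_eq_mul, mul_one]
    congr 1
    exact Finset.sum_congr rfl fun j _ => Real.sq_sqrt (eig_nonneg A j)
  have h3 : ∑ j ∈ s, μ j ≤ frob A ^ 2 := by
    rw [frob_sq, ← sum_eig_eq_frob_sq]
    exact Finset.sum_le_sum_of_subset_of_nonneg (Finset.subset_univ s)
      fun j _ _ => eig_nonneg A j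
  have hcard : (s.card : ℝ) = (A.rank : ℝ) := by
    have hr := (Matrix.isHermitian_transpose_mul_self A).rank_eq_card_non_zero_eigs
    have hr2 : (Aᴴ * A).rank = A.rank := by
      rw [Matrix.conjTranspose_eq_transpose_of_trivial, Matrix.rank_transpose_mul_self]
    have hc2 : Fintype.card {i // μ i ≠ 0} = s.card := by
      convert Fintype.card_subtype (fun i => μ i ≠ 0) using 2
    exact_mod_cast congrArg (Nat.cast : ℕ → ℝ) (hc2.symm.trans (hr.symm.trans hr2))
  have hnn : 0 ≤ ∑ j ∈ s, Real.sqrt (μ j) := Finset.sum_nonneg fun j _ => Real.sqrt_nonneg _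
  have h4 : (∑ j ∈ s, Real.sqrt (μ j)) ^ 2 ≤ (A.rank : ℝ) * frob A ^ 2 := by
    rw [← hcard]
    exact h2.trans (mul_le_mul_of_nonneg_left h3 (Nat.cast_nonneg _))
  calc nucNorm A = Real.sqrt ((∑ j ∈ s, Real.sqrt (μ j)) ^ 2) := by
        rw [Real.sqrt_sq hnn, h1]
    _ ≤ Real.sqrt ((A.rank : ℝ) * frob A ^ 2) := Real.sqrt_le_sqrt h4
    _ = Real.sqrt ((A.rank : ℝ)) * frob A := by
        rw [Real.sqrt_mul (Nat.cast_nonneg _), Real.sqrt_sq (frob_nonneg A)]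

/-- Masked (matrix completion) version of the nuclear-norm error bound.
With `Z = L + S`, `rank L = K`, an arbitrary binary mask `Ω`, `L_max ≥ ‖L‖_∞`,
`c ∈ (0,1)`, `λ ≥ (2/(1−c))‖Ω ∘ S‖`, and `L̂` any minimizer of
`‖Ω ∘ (Z − A)‖_F² + λ‖A‖_*` over `{A : ‖A‖_∞ ≤ L_max}`, the error `Δ = L̂ − L`
satisfies `‖Ω ∘ Δ‖_F² + cλ‖Δ‖_* ≤ 2λ‖L‖_*`, and in particular
`‖Δ‖_F ≤ ‖Δ‖_* ≤ (2/c)‖L‖_* ≤ (2/c)√K‖L‖_F`. -/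
theorem nuclear_norm_masked_error_bound
    (N T K : ℕ) (L S : Matrix (Fin N) (Fin T) ℝ) (hK : L.rank = K)
    (Om : Matrix (Fin N) (Fin T) ℝ) (hOm : ∀ i j, Om i j = 0 ∨ Om i j = 1)
    (Lmax : ℝ) (hLmax : ∀ i j, |L i j| ≤ Lmax)
    (c : ℝ) (hc : c ∈ Set.Ioo (0 : ℝ) 1)
    (lam : ℝ) (hlam0 : 0 < lam)
    (hlam : 2 / (1 - c) * opNorm (Matrix.hadamard Om S) ≤ lam)
    (Lhat : Matrix (Fin N) (Fin T) ℝ)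
    (hLhat : ∀ i j, |Lhat i j| ≤ Lmax)
    (hmin : ∀ A : Matrix (Fin N) (Fin T) ℝ, (∀ i j, |A i j| ≤ Lmax) →
      frob (Matrix.hadamard Om (L + S - Lhat)) ^ 2 + lam * nucNorm Lhat ≤
        frob (Matrix.hadamard Om (L + S - A)) ^ 2 + lam * nucNorm A) :
    frob (Matrix.hadamard Om (Lhat - L)) ^ 2 + c * lam * nucNorm (Lhat - L) ≤
        2 * lam * nucNorm L ∧
    frob (Lhat - L) ≤ nucNorm (Lhat - L) ∧
    nucNorm (Lhat - L) ≤ 2 / c * nucNorm L ∧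
    2 / c * nucNorm L ≤ 2 / c * Real.sqrt K * frob L := by
  obtain ⟨hc0, hc1⟩ := hc
  set Δ := Lhat - L with hΔ
  set X := Matrix.hadamard Om S with hX
  set D := Matrix.hadamard Om Δ with hD
  have h1c : (0:ℝ) < 1 - c := by linarith
  have hXD : Matrix.hadamard Om (L + S - Lhat) = X - D := by
    ext i j
    simp only [Matrix.hadamard_apply, Matrix.sub_apply, Matrix.add_apply, hX, hD, hΔ]
    ring
  have hXS : Matrix.hadamard Om (L + S - L) = X := by
    ext i j
    simp only [Matrix.hadamard_apply, Matrix.sub_apply, Matrix.add_apply, hX]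
    ring
  have hmin' := hmin L hLmax
  rw [hXD, hXS] at hmin'
  have hexp : frob (X - D) ^ 2
      = frob X ^ 2 - 2 * (∑ i, ∑ j, X i j * D i j) + frob D ^ 2 := by
    rw [frob_sq, frob_sq, frob_sq]
    have e1 : ∀ i : Fin N, ∑ j, (X - D) i j ^ 2
        = ∑ j, (X i j ^ 2 - 2 * (X i j * D i j) + D i j ^ 2) := by
      intro i; refine Finset.sum_congr rfl fun j _ => ?_
      rw [Matrix.sub_apply]; ring
    simp_rw [e1, Finset.sum_add_distrib, Finset.sum_sub_distrib, ← Finset.mul_sum]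
  have hip : ∑ i, ∑ j, X i j * D i j = Matrix.trace (Δᵀ * X) := by
    rw [tr_form, Finset.sum_comm]
    refine Finset.sum_congr rfl fun j _ => Finset.sum_congr rfl fun i _ => ?_
    rcases hOm i j with h | h
    · simp [hD, hX, Matrix.hadamard_apply, h]
    · simp [hD, hX, Matrix.hadamard_apply, h]
      ring
  have hop : 2 * Matrix.trace (Δᵀ * X) ≤ lam * (1 - c) * nucNorm Δ := by
    have h1 : Matrix.trace (Δᵀ * X) ≤ nucNorm Δ * opNorm X := trace_le_nuc_mul_op Δ X
    have h2 : 2 * opNorm X ≤ lam * (1 - c) := by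
      rw [div_mul_eq_mul_div, div_le_iff₀ h1c] at hlam
      linarith
    nlinarith [nucNorm_nonneg Δ, opNorm_nonneg' X]
  have htri : nucNorm Δ ≤ nucNorm Lhat + nucNorm L := nuc_triangle_sub Lhat L
  have htri' : lam * nucNorm Δ ≤ lam * nucNorm Lhat + lam * nucNorm L := by
    have := mul_le_mul_of_nonneg_left htri hlam0.le
    linarith [this]
  have main1 : frob D ^ 2 + c * lam * nucNorm Δ ≤ 2 * lam * nucNorm L := by
    rw [hexp, hip] at hmin'
    linarith [hop, htri', hmin']
  have h5 : c * lam * nucNorm Δ ≤ 2 * lam * nucNorm L := by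
    nlinarith [sq_nonneg (frob D), main1]
  have part3 : nucNorm Δ ≤ 2 / c * nucNorm L := by
    rw [div_mul_eq_mul_div, le_div_iff₀ hc0]
    have hl : lam * (c * nucNorm Δ) ≤ lam * (2 * nucNorm L) := by linarith [h5]
    have := (mul_le_mul_iff_right₀ hlam0).mp hl
    linarith [this]
  have part4 : 2 / c * nucNorm L ≤ 2 / c * Real.sqrt K * frob L := by
    have h6 : nucNorm L ≤ Real.sqrt (K : ℝ) * frob L := by
      have := nuc_le_sqrt_rank_mul_frob L
      rwa [hK] at this
    have h2c : (0:ℝ) ≤ 2 / c := by positivity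
    calc 2 / c * nucNorm L ≤ 2 / c * (Real.sqrt (K : ℝ) * frob L) :=
        mul_le_mul_of_nonneg_left h6 h2c
      _ = 2 / c * Real.sqrt (K : ℝ) * frob L := by ring
  exact ⟨main1, frob_le_nuc Δ, part3, part4⟩
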